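/- For all positive integers n and m, s_{n,m} ⪯ s_{n+1,m} and s_{n,m} ⪯ s_{n,m+1}. -/

import Mathlib

open Classical

/-- A slope is an element of `ℚ ∪ {∞}`; `none` denotes `∞`. -/
abbrev Slope := Option ℚ

/-- The clue of `f` along the line of slope `s` (vertical line `x = c` when `s = ∞ = none`,
and the line `y = r·x + c` when `s = some r`), with respect to the grid
`I_{n,m} = {1,…,n} × {1,…,m} ⊆ ℤ²`: the sum of `f` over the grid points lying on the line. -/
noncomputable def clueSum (n m : ℕ) (s : Slope) (c : ℝ) (f : ℤ × ℤ → ℝ) : ℝ :=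
  ∑ p ∈ (Finset.Icc (1 : ℤ) n ×ˢ Finset.Icc (1 : ℤ) m).filter
      (fun p => match s with
        | none => (p.1 : ℝ) = c
        | some r => (p.2 : ℝ) = (r : ℝ) * (p.1 : ℝ) + c),
    f p

/-- `f` and `g` are `T`-clue-equivalent on `I_{n,m}`: for every slope `s ∈ T` and every line
of slope `s`, the clues of `f` and `g` along that line agree. -/
def ClueEquiv (n m : ℕ) (T : Set Slope) (f g : ℤ × ℤ → ℝ) : Prop :=
  ∀ s ∈ T, ∀ c : ℝ, clueSum n m s c f = clueSum n m s c g

/-- The entry `p ∈ I_{n,m}` is uniquely solvable with respect to the slope set `T`. -/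
def UniqSolv (n m : ℕ) (T : Set Slope) (p : ℤ × ℤ) : Prop :=
  ∀ f g : ℤ × ℤ → ℝ, ClueEquiv n m T f g → f p = g p

/-- The enumeration `σ` of the slope set `S = ℤ ∪ {1/k : k ≠ 0} ∪ {∞}` realizing the order
`0 ≺ ∞ ≺ −1 ≺ 1 ≺ −1/2 ≺ −2 ≺ 1/2 ≺ 2 ≺ −1/3 ≺ −3 ≺ 1/3 ≺ 3 ≺ ⋯`:
`σ 0 = 0`, `σ 1 = ∞`, `σ 2 = −1`, `σ 3 = 1`, and for `q ≥ 2`,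
`σ (4q−4) = −1/q`, `σ (4q−3) = −q`, `σ (4q−2) = 1/q`, `σ (4q−1) = q`. -/
def sigmaSlope : ℕ → Slope
  | 0 => some 0
  | 1 => none
  | 2 => some (-1)
  | 3 => some 1
  | (a + 4) =>
    let q : ℚ := ((a / 4 + 2 : ℕ) : ℚ)
    match a % 4 with
    | 0 => some (-(1 / q))
    | 1 => some (-q)
    | 2 => some (1 / q)
    | _ => some q

/-- `C_{σ(a)} = {t ∈ S : t ⪯ σ(a)}`, the set of the first `a + 1` slopes. -/
def CSet (a : ℕ) : Set Slope := sigmaSlope '' Set.Iic a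

/-- Either every entry of the first row or every entry of the last row of `I_{n,m}` is
uniquely solvable with respect to `C_{σ(a)}`. -/
def RowOK (n m a : ℕ) : Prop :=
  (∀ i : ℤ, 1 ≤ i → i ≤ (n : ℤ) → UniqSolv n m (CSet a) (i, 1)) ∨
  (∀ i : ℤ, 1 ≤ i → i ≤ (n : ℤ) → UniqSolv n m (CSet a) (i, (m : ℤ)))

/-- Either every entry of the first column or every entry of the last column of `I_{n,m}` is
uniquely solvable with respect to `C_{σ(a)}`. -/
def ColOK (n m a : ℕ) : Prop :=
  (∀ j : ℤ, 1 ≤ j → j ≤ (m : ℤ) → UniqSolv n m (CSet a) (1, j)) ∨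
  (∀ j : ℤ, 1 ≤ j → j ≤ (m : ℤ) → UniqSolv n m (CSet a) ((n : ℤ), j))

/-- The index (in the enumeration `σ`) of the invariant `r_{n,m}`: the ⪯-least `s ∈ S` such
that either the first or the last row of `I_{n,m}` is uniquely solvable w.r.t. `C_s`. -/
noncomputable def rInv (n m : ℕ) : ℕ := sInf {a | RowOK n m a}

/-- The index of the invariant `c_{n,m}`: the ⪯-least `s ∈ S` such that either the first or
the last column of `I_{n,m}` is uniquely solvable w.r.t. `C_s`. -/
noncomputable def cInv (n m : ℕ) : ℕ := sInf {a | ColOK n m a}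

/-- The index of the invariant `s_{n,m} = min{r_{n,m}, c_{n,m}}`. -/
noncomputable def sInv (n m : ℕ) : ℕ := min (rInv n m) (cInv n m)

/-- The index of the invariant `k_{n,m}`: the ⪯-least `s ∈ S` such that every entry of
`I_{n,m}` is uniquely solvable w.r.t. `C_s`. -/
noncomputable def kInv (n m : ℕ) : ℕ :=
  sInf {a | ∀ p : ℤ × ℤ, 1 ≤ p.1 → p.1 ≤ (n : ℤ) → 1 ≤ p.2 → p.2 ≤ (m : ℤ) →
    UniqSolv n m (CSet a) p}

/-- The index of the invariant `b_{n,m}`: the ⪯-least `s ∈ S` such that every entry of the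
border `B_{n,m} = ({1,n} × I_m) ∪ (I_n × {1,m})` is uniquely solvable w.r.t. `C_s`. -/
noncomputable def bInv (n m : ℕ) : ℕ :=
  sInf {a | ∀ p : ℤ × ℤ, 1 ≤ p.1 → p.1 ≤ (n : ℤ) → 1 ≤ p.2 → p.2 ≤ (m : ℤ) →
    (p.1 = 1 ∨ p.1 = (n : ℤ) ∨ p.2 = 1 ∨ p.2 = (m : ℤ)) →
    UniqSolv n m (CSet a) p}

/-!
A clue-equivalence on `I_{n,m}` transports to any larger grid containing a translate of
`I_{n,m}`: translate `f` and `g` and extend them by zero; a line meets the translated copy in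
the translate of a line of the same slope. Hence unique solvability passes from `I_{n',m'}` to
`I_{n,m}` along every translation embedding the small grid into the big one. The first row
(column) of `I_{n',m'}` restricts to the first row (column) of `I_{n,m}`, and the last one, after
translating, to the last one, so the defining sets of `r` and `c` only grow when the grid shrinks.
These sets are nonempty because a slope `k ≥ m` meets the grid in single points.
-/

noncomputable def grid (n m : ℕ) : Finset (ℤ × ℤ) := Finset.Icc (1 : ℤ) n ×ˢ Finset.Icc (1 : ℤ) m

lemma mem_grid {n m : ℕ} {p : ℤ × ℤ} :
    p ∈ grid n m ↔ 1 ≤ p.1 ∧ p.1 ≤ n ∧ 1 ≤ p.2 ∧ p.2 ≤ m := by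
  simp only [grid, Finset.mem_product, Finset.mem_Icc, and_assoc]

def OnLine : Slope → ℝ → ℤ × ℤ → Prop
  | none, c, p => (p.1 : ℝ) = c
  | some r, c, p => (p.2 : ℝ) = r * p.1 + c

lemma clueSum_eq_sum_filter (n m : ℕ) (s : Slope) (c : ℝ) (f : ℤ × ℤ → ℝ) :
    clueSum n m s c f = ∑ p ∈ (grid n m).filter (OnLine s c), f p := by
  cases s <;> rfl

lemma exists_onLine_add_iff (s : Slope) (c : ℝ) (d : ℤ × ℤ) :
    ∃ c', ∀ p, OnLine s c (p + d) ↔ OnLine s c' p := by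
  cases s with
  | none =>
    refine ⟨c - d.1, fun p => ?_⟩
    simp only [OnLine, Prod.fst_add, Int.cast_add]
    constructor <;> intro h <;> linarith
  | some r =>
    refine ⟨c + r * d.1 - d.2, fun p => ?_⟩
    simp only [OnLine, Prod.fst_add, Prod.snd_add, Int.cast_add]
    constructor <;> intro h <;> linarith

noncomputable def shiftExtend (n m : ℕ) (d : ℤ × ℤ) (f : ℤ × ℤ → ℝ) (q : ℤ × ℤ) : ℝ :=
  if q - d ∈ grid n m then f (q - d) else 0

lemma exists_clueSum_shiftExtend {n m n' m' : ℕ} {d : ℤ × ℤ}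
    (hd : ∀ p ∈ grid n m, p + d ∈ grid n' m') (s : Slope) (c : ℝ) :
    ∃ c', ∀ f, clueSum n' m' s c (shiftExtend n m d f) = clueSum n m s c' f := by
  obtain ⟨c', hc'⟩ := exists_onLine_add_iff s c d
  refine ⟨c', fun f => ?_⟩
  simp only [clueSum_eq_sum_filter, shiftExtend]
  rw [← Finset.sum_filter]
  refine Finset.sum_nbij' (· - d) (· + d) ?_ ?_ (fun q _ => sub_add_cancel q d)
    (fun p _ => add_sub_cancel_right p d) (fun _ _ => rfl)
  · intro q hq
    simp only [Finset.mem_filter] at hq ⊢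
    exact ⟨hq.2, (hc' _).1 (by rw [sub_add_cancel]; exact hq.1.2)⟩
  · intro p hp
    simp only [Finset.mem_filter, add_sub_cancel_right] at hp ⊢
    exact ⟨⟨hd p hp.1, (hc' p).2 hp.2⟩, hp.1⟩

theorem UniqSolv.of_add {n m n' m' : ℕ} {T : Set Slope} {p d : ℤ × ℤ}
    (hd : ∀ q ∈ grid n m, q + d ∈ grid n' m') (hp : p ∈ grid n m)
    (h : UniqSolv n' m' T (p + d)) : UniqSolv n m T p := by
  intro f g hfg
  have hext := h (shiftExtend n m d f) (shiftExtend n m d g) fun s hs c => by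
    obtain ⟨c', hc'⟩ := exists_clueSum_shiftExtend hd s c
    rw [hc', hc', hfg s hs c']
  simpa [shiftExtend, hp] using hext

theorem UniqSolv.of_filter_onLine_eq_singleton {n m : ℕ} {T : Set Slope} {s : Slope} {c : ℝ}
    {p : ℤ × ℤ} (hs : s ∈ T) (h : (grid n m).filter (OnLine s c) = {p}) : UniqSolv n m T p := by
  intro f g hfg
  simpa [clueSum_eq_sum_filter, h] using hfg s hs c

lemma filter_onLine_steep_eq_singleton {n m k : ℕ} {p : ℤ × ℤ} (hk : m ≤ k)
    (hp : p ∈ grid n m) :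
    (grid n m).filter (OnLine (some (k : ℚ)) (p.2 - k * p.1)) = {p} := by
  ext q
  simp only [Finset.mem_filter, Finset.mem_singleton, OnLine, Rat.cast_natCast]
  constructor
  · rintro ⟨hq, hline⟩
    have hZ : q.2 - p.2 = (k : ℤ) * (q.1 - p.1) := by
      have : (q.2 : ℝ) - p.2 = (k : ℝ) * (q.1 - p.1) := by linarith
      exact_mod_cast this
    rw [mem_grid] at hp hq
    have h1 : q.1 = p.1 := by
      rcases lt_trichotomy q.1 p.1 with h | h | h
      · nlinarith
      · exact h
      · nlinarith
    exact Prod.ext h1 (by rw [h1, sub_self, mul_zero] at hZ; omega)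
  · rintro rfl
    exact ⟨hp, by ring⟩

lemma sigmaSlope_four_mul_add_seven (m : ℕ) :
    sigmaSlope (4 * m + 7) = some ((m + 2 : ℕ) : ℚ) := by
  have h3 : (4 * m + 3) % 4 = 3 := by omega
  have h2 : (4 * m + 3) / 4 = m := by omega
  simp [sigmaSlope, h2, h3]

lemma exists_forall_uniqSolv (n m : ℕ) :
    ∃ a, ∀ p ∈ grid n m, UniqSolv n m (CSet a) p :=
  ⟨4 * m + 7, fun _ hp => UniqSolv.of_filter_onLine_eq_singleton
    ⟨4 * m + 7, Set.mem_Iic.2 le_rfl, sigmaSlope_four_mul_add_seven m⟩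
    (filter_onLine_steep_eq_singleton (by omega) hp)⟩

section Restriction

variable {n m n' m' a : ℕ}

theorem RowOK.of_le (hm : 0 < m) (hn : n ≤ n') (hm' : m ≤ m') (h : RowOK n' m' a) :
    RowOK n m a := by
  rcases h with h | h
  · refine Or.inl fun i hi hin =>
      UniqSolv.of_add (d := 0) ?_ ?_ (by simpa using h i hi (by omega))
    · intro q hq; rw [add_zero, mem_grid] at *; omega
    · rw [mem_grid]; omega
  · refine Or.inr fun i hi hin =>
      UniqSolv.of_add (d := (0, (m' : ℤ) - m)) ?_ ?_ (by simpa using h i hi (by omega))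
    · intro q hq; rw [mem_grid] at *; simp only [Prod.fst_add, Prod.snd_add]; omega
    · rw [mem_grid]; omega

theorem ColOK.of_le (hn : 0 < n) (hn' : n ≤ n') (hm : m ≤ m') (h : ColOK n' m' a) :
    ColOK n m a := by
  rcases h with h | h
  · refine Or.inl fun j hj hjm =>
      UniqSolv.of_add (d := 0) ?_ ?_ (by simpa using h j hj (by omega))
    · intro q hq; rw [add_zero, mem_grid] at *; omega
    · rw [mem_grid]; omega
  · refine Or.inr fun j hj hjm =>
      UniqSolv.of_add (d := ((n' : ℤ) - n, 0)) ?_ ?_ (by simpa using h j hj (by omega))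
    · intro q hq; rw [mem_grid] at *; simp only [Prod.fst_add, Prod.snd_add]; omega
    · rw [mem_grid]; omega

theorem rInv_le_rInv (hm : 0 < m) (hn : n ≤ n') (hm' : m ≤ m') : rInv n m ≤ rInv n' m' := by
  obtain ⟨a, ha⟩ := exists_forall_uniqSolv n' m'
  have hne : {a | RowOK n' m' a}.Nonempty :=
    ⟨a, Or.inl fun i hi hin => ha _ (by rw [mem_grid]; omega)⟩
  exact csInf_le_csInf (OrderBot.bddBelow _) hne fun _ => RowOK.of_le hm hn hm'

theorem cInv_le_cInv (hn : 0 < n) (hn' : n ≤ n') (hm : m ≤ m') : cInv n m ≤ cInv n' m' := by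
  obtain ⟨a, ha⟩ := exists_forall_uniqSolv n' m'
  have hne : {a | ColOK n' m' a}.Nonempty :=
    ⟨a, Or.inl fun j hj hjm => ha _ (by rw [mem_grid]; omega)⟩
  exact csInf_le_csInf (OrderBot.bddBelow _) hne fun _ => ColOK.of_le hn hn' hm

theorem sInv_le_sInv (hn : 0 < n) (hm : 0 < m) (hn' : n ≤ n') (hm' : m ≤ m') :
    sInv n m ≤ sInv n' m' :=
  min_le_min (rInv_le_rInv hm hn' hm') (cInv_le_cInv hn hn' hm')

end Restriction

/-- `s_{n,m} ⪯ s_{n+1,m}` and `s_{n,m} ⪯ s_{n,m+1}` (comparison in the order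
`⪯` is comparison of indices in the enumeration `σ`). -/
theorem sInv_mono (n m : ℕ) (hn : 0 < n) (hm : 0 < m) :
    sInv n m ≤ sInv (n + 1) m ∧ sInv n m ≤ sInv n (m + 1) :=
  ⟨sInv_le_sInv hn hm (Nat.le_succ n) le_rfl, sInv_le_sInv hn hm le_rfl (Nat.le_succ m)⟩
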